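/- arXiv:2310.11337 — 2 statements merged into one kernel-verified Lean document; each statement's English description precedes it below -/
import Mathlib

section
/- Northcott's theorem with bounded degree: for every d ∈ ℕ and X ≥ 1, the set of algebraic numbers α with [ℚ(α):ℚ] ≤ d and H(α) ≤ X is finite. Equivalently, the set {α ∈ ℚ̄ : [ℚ(α):ℚ] ≤ d} has the Northcott property. -/
/-!
For algebraic `α` of degree `n`, `H(α) ^ n` is the Mahler measure of the primitive integer
minimal polynomial of `α`. Bounding the degree and the height therefore bounds the degree and the
Mahler measure of this polynomial; by Northcott's theorem for the Mahler measure there are only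
finitely many such integer polynomials, and each has finitely many roots.
-/

open Polynomial NumberField

/-- The primitive integer minimal polynomial of an algebraic number `α`. -/
noncomputable def intMinpoly {A : Type*} [Field A] [CharZero A] (α : A) : Polynomial ℤ :=
  (IsLocalization.integerNormalization (nonZeroDivisors ℤ) (minpoly ℚ α)).primPart

/-- The absolute multiplicative Weil height of an algebraic number `α`, computed via the
Mahler-measure formula `H(α)^[ℚ(α):ℚ] = |a_d| ∏_i max(1,|α_i|)`, where `a_d` is the leading
coefficient of the primitive integer minimal polynomial of `α` and the `α_i` are its complex
roots. -/
noncomputable def algHeight {A : Type*} [Field A] [CharZero A] (α : A) : ℝ :=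
  ((|(intMinpoly α).leadingCoeff| : ℝ) *
      (((intMinpoly α).aroots ℂ).map fun z => max 1 ‖z‖).prod) ^
    (((minpoly ℚ α).natDegree : ℝ))⁻¹

/-- A set `S` of algebraic numbers has the Northcott property if for every `X ≥ 1` the set
of elements of `S` of height at most `X` is finite. -/
def NorthcottProp {A : Type*} [Field A] [CharZero A] (S : Set A) : Prop :=
  ∀ X : ℝ, 1 ≤ X → {α ∈ S | algHeight α ≤ X}.Finite

section

variable {A : Type*} [Field A] [CharZero A]

theorem natDegree_intMinpoly (α : A) :
    (intMinpoly α).natDegree = (minpoly ℚ α).natDegree := by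
  obtain ⟨b, hb, hmap⟩ :=
    IsLocalization.integerNormalization_spec (nonZeroDivisors ℤ) (minpoly ℚ α)
  have hb0 : (b : ℚ) ≠ 0 := mod_cast nonZeroDivisors.ne_zero hb
  have := congrArg natDegree hmap
  rw [intMinpoly, natDegree_primPart]
  rwa [natDegree_map_eq_of_injective (algebraMap ℤ ℚ).injective_int, zsmul_eq_mul,
    ← C_eq_intCast, natDegree_C_mul hb0] at this

theorem mem_aroots_intMinpoly {α : A} (hα : IsIntegral ℚ α) : α ∈ (intMinpoly α).aroots A := by
  have hnorm : IsLocalization.integerNormalization (nonZeroDivisors ℤ) (minpoly ℚ α) ≠ 0 :=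
    IsFractionRing.integerNormalization_eq_zero_iff.not.2 (minpoly.ne_zero hα)
  refine mem_aroots.2 ⟨primPart_ne_zero _, aeval_primPart_eq_zero hnorm ?_⟩
  exact IsLocalization.integerNormalization_aeval_eq_zero _ _ (minpoly.aeval ℚ α)

theorem algHeight_eq_mahlerMeasure_rpow (α : A) :
    algHeight α = ((intMinpoly α).map (Int.castRingHom ℂ)).mahlerMeasure ^
      ((minpoly ℚ α).natDegree : ℝ)⁻¹ := by
  rw [mahlerMeasure_eq_leadingCoeff_mul_prod_roots,
    leadingCoeff_map_of_injective (Int.castRingHom ℂ).injective_int]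
  simp [algHeight, aroots]

theorem algHeight_nonneg (α : A) : 0 ≤ algHeight α := by
  rw [algHeight_eq_mahlerMeasure_rpow]
  exact Real.rpow_nonneg (mahlerMeasure_nonneg _) _

theorem mahlerMeasure_intMinpoly_eq_algHeight_pow {α : A} (hα : IsIntegral ℚ α) :
    ((intMinpoly α).map (Int.castRingHom ℂ)).mahlerMeasure =
      algHeight α ^ (minpoly ℚ α).natDegree := by
  have hn : ((minpoly ℚ α).natDegree : ℝ) ≠ 0 := mod_cast (minpoly.natDegree_pos hα).ne'
  rw [algHeight_eq_mahlerMeasure_rpow, ← Real.rpow_natCast,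
    ← Real.rpow_mul (mahlerMeasure_nonneg _), inv_mul_cancel₀ hn, Real.rpow_one]

theorem finite_setOf_natDegree_minpoly_le_and_algHeight_le [Algebra.IsAlgebraic ℚ A]
    (d : ℕ) (X : ℝ) : {α : A | (minpoly ℚ α).natDegree ≤ d ∧ algHeight α ≤ X}.Finite := by
  classical
  let B : NNReal := ⟨max 1 X ^ d, by positivity⟩
  refine ((finite_mahlerMeasure_le d B).biUnion
    fun p _ => (p.aroots A).toFinset.finite_toSet).subset ?_
  rintro α ⟨hd, hH⟩
  have hα : IsIntegral ℚ α := Algebra.IsIntegral.isIntegral α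
  refine Set.mem_biUnion (x := intMinpoly α) ⟨(natDegree_intMinpoly α).trans_le hd, ?_⟩ ?_
  · calc _ = algHeight α ^ (minpoly ℚ α).natDegree :=
          mahlerMeasure_intMinpoly_eq_algHeight_pow hα
      _ ≤ max 1 X ^ (minpoly ℚ α).natDegree :=
          pow_le_pow_left₀ (algHeight_nonneg α) (hH.trans (le_max_right 1 X)) _
      _ ≤ max 1 X ^ d := pow_le_pow_right₀ (le_max_left 1 X) hd
  · simpa using mem_aroots_intMinpoly hα

theorem northcottProp_setOf_natDegree_minpoly_le [Algebra.IsAlgebraic ℚ A] (d : ℕ) :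
    NorthcottProp {α : A | (minpoly ℚ α).natDegree ≤ d} :=
  fun X _ => finite_setOf_natDegree_minpoly_le_and_algHeight_le d X

end

/-- Northcott's theorem with bounded degree: for every `d ∈ ℕ` and `X ≥ 1`, the
set of algebraic numbers `α` with `[ℚ(α):ℚ] ≤ d` and `H(α) ≤ X` is finite; equivalently,
`{α ∈ ℚ̄ : [ℚ(α):ℚ] ≤ d}` has the Northcott property. -/
theorem northcott_bounded_degree (d : ℕ) :
    (∀ X : ℝ, 1 ≤ X →
      {α : AlgebraicClosure ℚ | (minpoly ℚ α).natDegree ≤ d ∧ algHeight α ≤ X}.Finite) ∧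
    NorthcottProp {α : AlgebraicClosure ℚ | (minpoly ℚ α).natDegree ≤ d} := by
  -- `AlgebraicClosure.isAlgebraic` is stated for `AlgebraicClosure.instAlgebra`, which agrees
  -- with the ℚ-algebra structure `DivisionRing.toRatAlgebra` only up to unfolding.
  have : Algebra.IsAlgebraic ℚ (AlgebraicClosure ℚ) := AlgebraicClosure.isAlgebraic ℚ
  exact ⟨northcottProp_setOf_natDegree_minpoly_le d, northcottProp_setOf_natDegree_minpoly_le d⟩
end

section
/- If K₁ and K₂ are finite Galois extensions of a field K inside a fixed algebraic closure, then the map σ ↦ (σ|_{K₁}, σ|_{K₂}) is an injective group homomorphism from Gal(K₁K₂/K) into Gal(K₁/K) × Gal(K₂/K). Consequently, if M/K is a finite Galois extension contained in the compositum K^{(d)} of all extensions of K of degree at most d, then the exponent of Gal(M/K) divides d!, and no prime p > d divides the order of Gal(M/K). -/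
/-- `K^{(d)}`: the compositum inside a fixed algebraic closure of all extensions of `K` of
degree at most `d`. -/
noncomputable def compositumDeg' (K : Type*) [Field K] (d : ℕ) :
    IntermediateField K (AlgebraicClosure K) :=
  ⨆ E ∈ {E : IntermediateField K (AlgebraicClosure K) |
    FiniteDimensional K ↥E ∧ Module.finrank K ↥E ≤ d}, E

/-!
An automorphism of `K₁K₂ = K(K₁ ∪ K₂)` that is trivial on `K₁` and on `K₂` is trivial, so the
restriction map is injective.

For the consequence, a finite-dimensional `M ≤ K^{(d)}` is a compact element of the lattice of
intermediate fields, hence lies in the compositum `N` of the normal closures `Ẽ` of finitely many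
`E` with `[E : K] ≤ d`. The group `Gal(Ẽ/K)` acts faithfully on the at most `d` embeddings
`E → Ẽ`, so its order divides `d!`; `Gal(N/K)` embeds into the product of these groups and
`Gal(M/K)` is a quotient of `Gal(N/K)`. Both "exponent dividing `d!`" and "no prime factor
`> d`" survive subgroups of finite products and quotients.
-/

open IntermediateField

def FactorialBounded (d : ℕ) (G : Type*) [Group G] : Prop :=
  Monoid.exponent G ∣ d.factorial ∧ ∀ p : ℕ, p.Prime → d < p → ¬ p ∣ Nat.card G

namespace FactorialBounded

variable {d : ℕ} {G H : Type*} [Group G] [Group H]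

theorem of_card_dvd (h : Nat.card G ∣ d.factorial) : FactorialBounded d G :=
  ⟨Group.exponent_dvd_nat_card.trans h, fun _ hp hdp hpG ↦
    hdp.not_ge (hp.dvd_factorial.mp (hpG.trans h))⟩

theorem of_surjective (f : G →* H) (hf : Function.Surjective f) (hG : FactorialBounded d G) :
    FactorialBounded d H :=
  ⟨(MonoidHom.exponent_dvd hf).trans hG.1, fun p hp hdp hpH ↦
    hG.2 p hp hdp (hpH.trans (Subgroup.card_dvd_of_surjective f hf))⟩

theorem of_injective_pi {ι : Type*} [Fintype ι] {H : ι → Type*} [∀ i, Group (H i)]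
    (f : G →* ∀ i, H i) (hf : Function.Injective f) (hH : ∀ i, FactorialBounded d (H i)) :
    FactorialBounded d G := by
  refine ⟨(Monoid.exponent_dvd_of_monoidHom f hf).trans ?_, fun p hp hdp hpG ↦ ?_⟩
  · rw [Monoid.exponent_pi]
    exact Finset.lcm_dvd fun i _ ↦ (hH i).1
  · have hp_prod : p ∣ ∏ i, Nat.card (H i) :=
      Nat.card_pi (β := H) ▸ hpG.trans (Subgroup.card_dvd_of_injective f hf)
    obtain ⟨i, -, hpi⟩ := (Prime.dvd_finsetProd_iff hp.prime _).mp hp_prod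
    exact (hH i).2 p hp hdp hpi

end FactorialBounded

noncomputable def AlgEquiv.toPermAlgHom (R A B : Type*) [CommSemiring R] [Semiring A]
    [Semiring B] [Algebra R A] [Algebra R B] : (B ≃ₐ[R] B) →* Equiv.Perm (A →ₐ[R] B) where
  toFun σ := AlgEquiv.arrowCongr AlgEquiv.refl σ
  map_one' := AlgEquiv.arrowCongr_refl
  map_mul' σ τ := by ext; simp

namespace IntermediateField

variable {K L : Type*} [Field K] [Field L] [Algebra K L]

theorem algEquiv_eq_one_of_eq_adjoin {T : IntermediateField K L} {S : Set L}
    (hT : T = adjoin K S) {σ : T ≃ₐ[K] T}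
    (hσ : ∀ x (hx : x ∈ S), (σ ⟨x, hT.ge (subset_adjoin K S hx)⟩ : L) = x) : σ = 1 :=
  AlgEquiv.ext fun y ↦ DFunLike.congr_fun
    (algHom_ext_of_eq_adjoin K hT (φ₁ := σ.toAlgHom) (φ₂ := AlgHom.id K T)
      fun x hx ↦ Subtype.ext (hσ x hx)) y

theorem isCompactElement_of_finiteDimensional (M : IntermediateField K L)
    [FiniteDimensional K M] : IsCompactElement M := by
  obtain ⟨t, ht, rfl⟩ := fg_def.mp <| M.fg_of_fg_toSubalgebra <|
    (Subalgebra.fg_iff_finiteType _).mpr inferInstance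
  exact adjoin_finite_isCompactElement ht

section restrictNormalHomOfLE

variable {E T : IntermediateField K L} (h : E ≤ T) [Normal K E]

noncomputable def restrictNormalHomOfLE : (T ≃ₐ[K] T) →* (E ≃ₐ[K] E) :=
  letI := (inclusion h).toAlgebra
  haveI : IsScalarTower K E T := .of_algebraMap_eq fun _ ↦ rfl
  AlgEquiv.restrictNormalHom E

theorem restrictNormalHomOfLE_apply (σ : T ≃ₐ[K] T) (x : E) :
    (restrictNormalHomOfLE h σ x : L) = σ (inclusion h x) :=
  letI := (inclusion h).toAlgebra
  haveI : IsScalarTower K E T := .of_algebraMap_eq fun _ ↦ rfl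
  congrArg Subtype.val (AlgEquiv.restrictNormal_commutes σ E x)

theorem restrictNormalHomOfLE_surjective [Normal K T] :
    Function.Surjective (restrictNormalHomOfLE h) :=
  letI := (inclusion h).toAlgebra
  haveI : IsScalarTower K E T := .of_algebraMap_eq fun _ ↦ rfl
  AlgEquiv.restrictNormalHom_surjective T

theorem restrictNormalHomOfLE_eq_one_apply {σ : T ≃ₐ[K] T}
    (hσ : restrictNormalHomOfLE h σ = 1) {x : L} (hx : x ∈ E) : (σ ⟨x, h hx⟩ : L) = x := by
  have hσx := restrictNormalHomOfLE_apply h σ ⟨x, hx⟩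
  rw [hσ] at hσx
  exact hσx.symm

end restrictNormalHomOfLE

theorem restrictNormalHomOfLE_prod_injective (K₁ K₂ : IntermediateField K L)
    [Normal K K₁] [Normal K K₂] :
    Function.Injective ((restrictNormalHomOfLE (le_sup_left : K₁ ≤ K₁ ⊔ K₂)).prod
      (restrictNormalHomOfLE (le_sup_right : K₂ ≤ K₁ ⊔ K₂))) := by
  refine (injective_iff_map_eq_one _).mpr fun σ hσ ↦
    algEquiv_eq_one_of_eq_adjoin (sup_def K₁ K₂) ?_
  rintro x (hx | hx)
  · exact restrictNormalHomOfLE_eq_one_apply le_sup_left (congrArg Prod.fst hσ) hx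
  · exact restrictNormalHomOfLE_eq_one_apply le_sup_right (congrArg Prod.snd hσ) hx

theorem restrictNormalHomOfLE_pi_injective {ι : Type*} (F : ι → IntermediateField K L)
    [∀ i, Normal K (F i)] :
    Function.Injective (MonoidHom.pi fun i ↦ restrictNormalHomOfLE (le_iSup F i)) := by
  refine (injective_iff_map_eq_one _).mpr fun σ hσ ↦
    algEquiv_eq_one_of_eq_adjoin (iSup_eq_adjoin K F) fun x hx ↦ ?_
  obtain ⟨i, hx⟩ := Set.mem_iUnion.mp hx
  exact restrictNormalHomOfLE_eq_one_apply (le_iSup F i) (congrFun hσ i) hx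

end IntermediateField

theorem toPermAlgHom_normalClosure_injective (K E L : Type*) [Field K] [Field E] [Field L]
    [Algebra K E] [Algebra K L] :
    Function.Injective (AlgEquiv.toPermAlgHom K E (normalClosure K E L)) := by
  refine (injective_iff_map_eq_one _).mpr fun σ hσ ↦
    algEquiv_eq_one_of_eq_adjoin (iSup_eq_adjoin K _) fun x hx ↦ ?_
  obtain ⟨f, y, rfl⟩ := Set.mem_iUnion.mp hx
  exact congrArg Subtype.val <|
    DFunLike.congr_fun (Equiv.ext_iff.mp hσ ((normalClosure.algHomEquiv K E L).symm f)) y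

theorem factorialBounded_normalClosure {K E : Type*} (L : Type*) [Field K] [Field E] [Field L]
    [Algebra K E] [Algebra K L] [FiniteDimensional K E] {d : ℕ}
    (hd : Module.finrank K E ≤ d) :
    FactorialBounded d (normalClosure K E L ≃ₐ[K] normalClosure K E L) := by
  refine .of_card_dvd <| (Subgroup.card_dvd_of_injective _
    (toPermAlgHom_normalClosure_injective K E L)).trans ?_
  rw [Nat.card_perm]
  exact Nat.factorial_dvd_factorial ((card_algHom_le_finrank K E _).trans hd)

/-- if `K₁` and `K₂` are finite Galois extensions of `K` inside a fixed bigger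
field, then `σ ↦ (σ|_{K₁}, σ|_{K₂})` is an injective group homomorphism from
`Gal(K₁K₂/K)` into `Gal(K₁/K) × Gal(K₂/K)`.  Consequently, if `M/K` is a finite Galois
extension contained in the compositum `K^{(d)}` of all extensions of `K` of degree at most
`d`, then the exponent of `Gal(M/K)` divides `d!` and no prime `p > d` divides the order of
`Gal(M/K)`. -/
theorem galois_compositum_restriction (K : Type*) [Field K] (d : ℕ) :
    (∀ (L : Type*) [Field L] [Algebra K L] (K₁ K₂ : IntermediateField K L)
      [FiniteDimensional K ↥K₁] [FiniteDimensional K ↥K₂] [Normal K ↥K₁] [Normal K ↥K₂],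
      ∃ φ : (↥(K₁ ⊔ K₂) ≃ₐ[K] ↥(K₁ ⊔ K₂)) →* (↥K₁ ≃ₐ[K] ↥K₁) × (↥K₂ ≃ₐ[K] ↥K₂),
        Function.Injective φ ∧
        (∀ (σ : ↥(K₁ ⊔ K₂) ≃ₐ[K] ↥(K₁ ⊔ K₂)) (x : ↥K₁),
          ((((φ σ).1 x : ↥K₁) : L) =
            ((σ (IntermediateField.inclusion le_sup_left x) : ↥(K₁ ⊔ K₂)) : L))) ∧
        (∀ (σ : ↥(K₁ ⊔ K₂) ≃ₐ[K] ↥(K₁ ⊔ K₂)) (x : ↥K₂),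
          ((((φ σ).2 x : ↥K₂) : L) =
            ((σ (IntermediateField.inclusion le_sup_right x) : ↥(K₁ ⊔ K₂)) : L)))) ∧
    (∀ (M : IntermediateField K (AlgebraicClosure K)) [FiniteDimensional K ↥M]
      [IsGalois K ↥M], M ≤ compositumDeg' K d →
        Monoid.exponent (↥M ≃ₐ[K] ↥M) ∣ Nat.factorial d ∧
        ∀ p : ℕ, p.Prime → d < p → ¬ p ∣ Nat.card (↥M ≃ₐ[K] ↥M)) := by
  refine ⟨fun L _ _ K₁ K₂ _ _ _ _ ↦ ⟨_, restrictNormalHomOfLE_prod_injective K₁ K₂,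
    restrictNormalHomOfLE_apply le_sup_left, restrictNormalHomOfLE_apply le_sup_right⟩, ?_⟩
  intro M _ _ hM
  rw [compositumDeg', ← sSup_eq_iSup] at hM
  obtain ⟨t, ht, hMt⟩ := (CompleteLattice.isCompactElement_iff_exists_le_sSup_of_le_sSup _ M).mp
    (isCompactElement_of_finiteDimensional M) _ hM
  let N : ↥t → IntermediateField K (AlgebraicClosure K) :=
    fun E ↦ normalClosure K E (AlgebraicClosure K)
  have hMN : M ≤ iSup N := by
    rw [Finset.sup_id_eq_sSup, sSup_eq_iSup'] at hMt
    exact hMt.trans (iSup_mono fun E ↦ le_normalClosure _)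
  have hN : FactorialBounded d (↥(iSup N) ≃ₐ[K] ↥(iSup N)) :=
    .of_injective_pi _ (restrictNormalHomOfLE_pi_injective N) fun E ↦
      have := (ht E.2).1
      factorialBounded_normalClosure _ (ht E.2).2
  exact hN.of_surjective _ (restrictNormalHomOfLE_surjective hMN)
end
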